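/- arXiv:1207.0434 — 7 statements merged into one kernel-verified Lean document; each statement's English description precedes it below -/
import Mathlib

section
/- If the initial and final states are Gibbs thermal states at temperature T with partition functions Z_p and Z_q respectively, then the ε-risk extractable work is W^ε = kT ln(Z_q/Z_p) + kT ln(1/(1-ε)). -/
/-!
For uniform-type densities `f = c·𝟙_(0,P]` and `g = d·𝟙_(0,Q]` the cumulative integrals are
`c·min l P` and `d·min l Q`. When `g` carries no more mass than `f` (`d Q ≤ c P`), the binding
constraint on `m` is the initial slope, `d m ≤ c`, so `M(f‖g) = c / d`; testing at
`l = min P (Q/m)`, where neither minimum is saturated, shows that no larger `m` is admissible.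
For Gibbs states `c = 1/(Z_p(1-ε))`, `d = 1/Z_q`.
-/

open MeasureTheory Set

/-- The set of admissible mixing factors in the definition of relative mixedness. -/
noncomputable def mixSet (f g : ℝ → ℝ) : Set ℝ :=
  {m | 0 < m ∧ ∀ l : ℝ, 0 ≤ l → ∫ x in (0:ℝ)..(l * m), g x ≤ ∫ x in (0:ℝ)..l, f x}

/-- The relative mixedness `M(f‖g)`. -/
noncomputable def relMix (f g : ℝ → ℝ) : ℝ := sSup (mixSet f g)

theorem intervalIntegral_indicator_Ioc_const {Z l : ℝ} (c : ℝ) (hZ : 0 ≤ Z) (hl : 0 ≤ l) :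
    ∫ x in (0:ℝ)..l, (Ioc 0 Z).indicator (fun _ => c) x = c * min l Z := by
  rw [intervalIntegral.integral_of_le hl, setIntegral_indicator measurableSet_Ioc,
    Ioc_inter_Ioc, max_self, setIntegral_const, measureReal_def, Real.volume_Ioc, sub_zero,
    ENNReal.toReal_ofReal (le_min hl hZ), smul_eq_mul, mul_comm]

section UniformDensities

variable {c d P Q : ℝ}

theorem mem_mixSet_indicator_Ioc_iff (hP : 0 ≤ P) (hQ : 0 ≤ Q) {m : ℝ} :
    m ∈ mixSet ((Ioc 0 P).indicator fun _ => c) ((Ioc 0 Q).indicator fun _ => d) ↔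
      0 < m ∧ ∀ l : ℝ, 0 ≤ l → d * min (l * m) Q ≤ c * min l P := by
  refine and_congr_right fun hm => forall₂_congr fun l hl => ?_
  rw [intervalIntegral_indicator_Ioc_const c hP hl,
    intervalIntegral_indicator_Ioc_const d hQ (mul_nonneg hl hm.le)]

theorem div_mem_mixSet_indicator_Ioc (hc : 0 < c) (hd : 0 < d) (hP : 0 ≤ P) (hQ : 0 ≤ Q)
    (hmass : d * Q ≤ c * P) :
    c / d ∈ mixSet ((Ioc 0 P).indicator fun _ => c) ((Ioc 0 Q).indicator fun _ => d) := by
  refine (mem_mixSet_indicator_Ioc_iff hP hQ).2 ⟨div_pos hc hd, fun l hl => ?_⟩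
  rcases le_total l P with hlP | hPl
  · calc d * min (l * (c / d)) Q ≤ d * (l * (c / d)) := by gcongr; exact min_le_left _ _
      _ = c * l := by field_simp
      _ = c * min l P := by rw [min_eq_left hlP]
  · calc d * min (l * (c / d)) Q ≤ d * Q := by gcongr; exact min_le_right _ _
      _ ≤ c * P := hmass
      _ = c * min l P := by rw [min_eq_right hPl]

theorem le_div_of_mem_mixSet_indicator_Ioc (hd : 0 < d) (hP : 0 < P) (hQ : 0 < Q)
    {m : ℝ} (hm : m ∈ mixSet ((Ioc 0 P).indicator fun _ => c) ((Ioc 0 Q).indicator fun _ => d)) :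
    m ≤ c / d := by
  obtain ⟨hm_pos, hm⟩ := (mem_mixSet_indicator_Ioc_iff hP.le hQ.le).1 hm
  set l := min P (Q / m)
  have hl_pos : 0 < l := lt_min hP (div_pos hQ hm_pos)
  have hlm : l * m ≤ Q := (le_div_iff₀ hm_pos).1 (min_le_right _ _)
  have h := hm l hl_pos.le
  rw [min_eq_left hlm, min_eq_left (min_le_left P _)] at h
  rw [le_div_iff₀ hd]
  exact le_of_mul_le_mul_left (by linarith) hl_pos

theorem relMix_indicator_Ioc (hc : 0 < c) (hd : 0 < d) (hQ : 0 < Q) (hmass : d * Q ≤ c * P) :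
    relMix ((Ioc 0 P).indicator fun _ => c) ((Ioc 0 Q).indicator fun _ => d) = c / d := by
  have hP : 0 < P := pos_of_mul_pos_right ((mul_pos hd hQ).trans_le hmass) hc.le
  exact IsGreatest.csSup_eq ⟨div_mem_mixSet_indicator_Ioc hc hd hP.le hQ.le hmass,
    fun _ => le_div_of_mem_mixSet_indicator_Ioc hd hP hQ⟩

end UniformDensities

theorem work_between_gibbs_states_general
    (k T Zp Zq ε : ℝ)
    (hZp : 0 < Zp) (hZq : 0 < Zq) (hε0 : 0 ≤ ε) (hε1 : ε < 1) :
    k * T * Real.log (relMix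
        (fun x => (Set.indicator (Set.Ioc (0:ℝ) Zp) (fun _ => 1 / Zp) x) / (1 - ε))
        (Set.indicator (Set.Ioc (0:ℝ) Zq) (fun _ => 1 / Zq)))
      = k * T * Real.log (Zq / Zp) + k * T * Real.log (1 / (1 - ε)) := by
  have hε : 0 < 1 - ε := by linarith
  have hrescale : (fun x => (Ioc 0 Zp).indicator (fun _ => 1 / Zp) x / (1 - ε)) =
      (Ioc 0 Zp).indicator fun _ => 1 / Zp / (1 - ε) := by
    funext x
    simp only [div_eq_mul_inv (b := 1 - ε), indicator_mul_const]
  have hmass : 1 / Zq * Zq ≤ 1 / Zp / (1 - ε) * Zp := by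
    rw [one_div_mul_cancel hZq.ne', div_mul_eq_mul_div, one_div_mul_cancel hZp.ne',
      le_div_iff₀ hε]
    linarith
  rw [hrescale, relMix_indicator_Ioc (by positivity) (by positivity) hZq hmass,
    show 1 / Zp / (1 - ε) / (1 / Zq) = Zq / Zp * (1 / (1 - ε)) by field_simp,
    Real.log_mul (by positivity) (by positivity), mul_add]

/-- If the initial and final states are Gibbs thermal states with partition functions
`Zp` and `Zq` (whose Gibbs rescalings are the uniform densities `1/Zp` on `(0,Zp]`
and `1/Zq` on `(0,Zq]`), the ε-risk extractable work is
`W^ε = kT ln(Zq/Zp) + kT ln(1/(1-ε))`. -/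
theorem work_between_gibbs_states
    (k T Zp Zq ε : ℝ) (hk : 0 < k) (hT : 0 < T)
    (hZp : 0 < Zp) (hZq : 0 < Zq) (hε0 : 0 ≤ ε) (hε1 : ε < 1) :
    k * T * Real.log (relMix
        (fun x => (Set.indicator (Set.Ioc (0:ℝ) Zp) (fun _ => 1 / Zp) x) / (1 - ε))
        (Set.indicator (Set.Ioc (0:ℝ) Zq) (fun _ => 1 / Zq)))
      = k * T * Real.log (Zq / Zp) + k * T * Real.log (1 / (1 - ε)) :=
  work_between_gibbs_states_general k T Zp Zq ε hZp hZq hε0 hε1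
end

section
/- Relative mixedness satisfies a multiplicative triangle inequality: for any three densities p, s, q (Gibbs-rescaled states) and ε₁, ε₂ ∈ [0,1) with ε₁ + ε₂ < 1, if m₁ = M(p/(1-ε₁) || s) and m₂ = M(s/(1-ε₂) || q), then M(p/(1-(ε₁+ε₂)) || q) ≥ m₁·m₂. -/
open MeasureTheory Set

/-- Multiplicative triangle inequality for the relative mixedness. -/
theorem relMix_triangle
    (p s q : ℝ → ℝ)
    (hp_anti : AntitoneOn p (Ici 0)) (hs_anti : AntitoneOn s (Ici 0))
    (hq_anti : AntitoneOn q (Ici 0))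
    (hp_nonneg : ∀ x, 0 ≤ p x) (hs_nonneg : ∀ x, 0 ≤ s x) (hq_nonneg : ∀ x, 0 ≤ q x)
    (hp_int : IntegrableOn p (Ici 0)) (hs_int : IntegrableOn s (Ici 0))
    (hq_int : IntegrableOn q (Ici 0))
    (hp_prob : ∫ x in Set.Ici (0:ℝ), p x = 1)
    (hs_prob : ∫ x in Set.Ici (0:ℝ), s x = 1)
    (hq_prob : ∫ x in Set.Ici (0:ℝ), q x = 1)
    (ε₁ ε₂ : ℝ) (hε₁ : 0 ≤ ε₁) (hε₂ : 0 ≤ ε₂) (hε : ε₁ + ε₂ < 1)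
    (m₁ m₂ : ℝ)
    (hm₁ : m₁ = relMix (fun x => p x / (1 - ε₁)) s)
    (hm₂ : m₂ = relMix (fun x => s x / (1 - ε₂)) q) :
    m₁ * m₂ ≤ relMix (fun x => p x / (1 - (ε₁ + ε₂))) q := by
  have h1 : (0:ℝ) < 1 - ε₁ := by linarith
  have h2 : (0:ℝ) < 1 - ε₂ := by linarith
  have h3 : (0:ℝ) < 1 - (ε₁ + ε₂) := by linarith
  -- products of admissible factors are admissible for the composite
  have hmul : ∀ a ∈ mixSet (fun x => p x / (1 - ε₁)) s,
      ∀ b ∈ mixSet (fun x => s x / (1 - ε₂)) q,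
      a * b ∈ mixSet (fun x => p x / (1 - (ε₁ + ε₂))) q := by
    rintro a ⟨ha, hA⟩ b ⟨hb, hB⟩
    refine ⟨mul_pos ha hb, fun l hl => ?_⟩
    have hla : 0 ≤ l * a := mul_nonneg hl ha.le
    have e1 := hB (l * a) hla
    have e2 := hA l hl
    simp only [intervalIntegral.integral_div] at e1 e2 ⊢
    have hp0 : 0 ≤ ∫ x in (0:ℝ)..l, p x :=
      intervalIntegral.integral_nonneg hl (fun x _ => hp_nonneg x)
    calc ∫ x in (0:ℝ)..(l * (a * b)), q x
        = ∫ x in (0:ℝ)..(l * a * b), q x := by ring_nf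
      _ ≤ (∫ x in (0:ℝ)..(l * a), s x) / (1 - ε₂) := e1
      _ ≤ ((∫ x in (0:ℝ)..l, p x) / (1 - ε₁)) / (1 - ε₂) := by gcongr
      _ = (∫ x in (0:ℝ)..l, p x) / ((1 - ε₁) * (1 - ε₂)) := by rw [div_div]
      _ ≤ (∫ x in (0:ℝ)..l, p x) / (1 - (ε₁ + ε₂)) := by
          apply div_le_div_of_nonneg_left hp0 h3
          nlinarith [mul_nonneg hε₁ hε₂]
  -- the target mixSet is bounded above
  have hbdd : BddAbove (mixSet (fun x => p x / (1 - (ε₁ + ε₂))) q) := by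
    obtain ⟨L, hL0, hLq⟩ : ∃ L : ℝ, 0 ≤ L ∧ 0 < ∫ x in (0:ℝ)..L, q x := by
      have hti : Filter.Tendsto (fun L => ∫ x in (0:ℝ)..L, q x) Filter.atTop (nhds 1) := by
        have := MeasureTheory.intervalIntegral_tendsto_integral_Ioi 0
          (hq_int.mono_set Set.Ioi_subset_Ici_self) Filter.tendsto_id
        rwa [← MeasureTheory.integral_Ici_eq_integral_Ioi, hq_prob] at this
      have := (hti.eventually (eventually_gt_nhds (by norm_num : (0:ℝ) < 1))).and
        (Filter.eventually_ge_atTop (0:ℝ))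
      obtain ⟨L, h1L, h2L⟩ := this.exists
      exact ⟨L, h2L, h1L⟩
    refine ⟨L * p 0 / ((1 - (ε₁ + ε₂)) * ∫ x in (0:ℝ)..L, q x), ?_⟩
    rintro m ⟨hm, hmle⟩
    have key := hmle (L / m) (by positivity)
    rw [div_mul_cancel₀ _ hm.ne'] at key
    simp only [intervalIntegral.integral_div] at key
    have hpb : ∫ x in (0:ℝ)..(L / m), p x ≤ (L / m) * p 0 := by
      have hint : IntervalIntegrable p volume 0 (L / m) := by
        rw [intervalIntegrable_iff, Set.uIoc_of_le (by positivity : (0:ℝ) ≤ L / m)]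
        exact hp_int.mono_set fun x hx => le_of_lt hx.1
      calc ∫ x in (0:ℝ)..(L / m), p x
          ≤ ∫ _x in (0:ℝ)..(L / m), p 0 := by
            apply intervalIntegral.integral_mono_on (by positivity) hint
              intervalIntegrable_const
            intro x hx
            exact hp_anti (Set.self_mem_Ici) hx.1 hx.1
        _ = (L / m) * p 0 := by simp
    have hI2 : (∫ x in (0:ℝ)..L, q x) * (1 - (ε₁ + ε₂)) ≤ (L / m) * p 0 :=
      ((le_div_iff₀ h3).mp key).trans hpb
    rw [le_div_iff₀ (by positivity)]
    calc m * ((1 - (ε₁ + ε₂)) * ∫ x in (0:ℝ)..L, q x)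
        = ((∫ x in (0:ℝ)..L, q x) * (1 - (ε₁ + ε₂))) * m := by ring
      _ ≤ ((L / m) * p 0) * m := mul_le_mul_of_nonneg_right hI2 hm.le
      _ = L * p 0 := by field_simp
  have hS3nonneg : 0 ≤ relMix (fun x => p x / (1 - (ε₁ + ε₂))) q :=
    Real.sSup_nonneg fun x hx => hx.1.le
  have hm₁0 : 0 ≤ m₁ := by rw [hm₁]; exact Real.sSup_nonneg fun x hx => hx.1.le
  have hm₂0 : 0 ≤ m₂ := by rw [hm₂]; exact Real.sSup_nonneg fun x hx => hx.1.le
  rcases eq_or_lt_of_le hm₁0 with h|h1pos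
  · rw [← h, zero_mul]; exact hS3nonneg
  rcases eq_or_lt_of_le hm₂0 with h|h2pos
  · rw [← h, mul_zero]; exact hS3nonneg
  have hS1ne : (mixSet (fun x => p x / (1 - ε₁)) s).Nonempty := by
    by_contra hne
    rw [Set.not_nonempty_iff_eq_empty] at hne
    rw [hm₁, relMix, hne, Real.sSup_empty] at h1pos
    exact lt_irrefl _ h1pos
  have hS1bdd : BddAbove (mixSet (fun x => p x / (1 - ε₁)) s) := by
    by_contra hb
    rw [hm₁, relMix, Real.sSup_of_not_bddAbove hb] at h1pos
    exact lt_irrefl _ h1pos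
  have hS2ne : (mixSet (fun x => s x / (1 - ε₂)) q).Nonempty := by
    by_contra hne
    rw [Set.not_nonempty_iff_eq_empty] at hne
    rw [hm₂, relMix, hne, Real.sSup_empty] at h2pos
    exact lt_irrefl _ h2pos
  have hS2bdd : BddAbove (mixSet (fun x => s x / (1 - ε₂)) q) := by
    by_contra hb
    rw [hm₂, relMix, Real.sSup_of_not_bddAbove hb] at h2pos
    exact lt_irrefl _ h2pos
  refine le_of_forall_lt fun c hc => ?_
  have hcm : c / m₂ < m₁ := (div_lt_iff₀ h2pos).mpr hc
  rw [hm₁, relMix] at hcm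
  obtain ⟨a, haS, hca⟩ := exists_lt_of_lt_csSup hS1ne hcm
  have ha0 : 0 < a := haS.1
  have hcab : c < a * m₂ := (div_lt_iff₀ h2pos).mp hca
  have hcam : c / a < m₂ := (div_lt_iff₀ ha0).mpr (by linarith [mul_comm a m₂])
  rw [hm₂, relMix] at hcam
  obtain ⟨b, hbS, hcb⟩ := exists_lt_of_lt_csSup hS2ne hcam
  have hcb' : c < a * b := by
    have := (div_lt_iff₀ ha0).mp hcb
    linarith [mul_comm b a]
  exact lt_of_lt_of_le hcb' (le_csSup hbdd (hmul a haS b hbS))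
end

section
/- Equivalently stated in terms of the work functional W^ε(ρ→σ) = kT ln M(G^T(ρ)/(1-ε)||G^T(σ)): for states A, B and ε ∈ [0, 1/2), W^ε(A→B) + W^ε(B→A) ≤ W^{2ε}(A→A). -/
open MeasureTheory Set

/-- The ε-risk extractable work `W^ε(ρ→σ) = kT ln M(G^T(ρ)/(1-ε) ‖ G^T(σ))`,
expressed directly in terms of the Gibbs-rescaled densities. -/
noncomputable def work (k T ε : ℝ) (ρ σ : ℝ → ℝ) : ℝ :=
  k * T * Real.log (relMix (fun x => ρ x / (1 - ε)) σ)

lemma mem_mix_comp {ε : ℝ} (hε0 : 0 ≤ ε) (hε : ε < 1 / 2) (a b : ℝ → ℝ)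
    (ha_nonneg : ∀ x, 0 ≤ a x)
    {m₁ m₂ : ℝ} (h₁ : m₁ ∈ mixSet (fun x => a x / (1 - ε)) b)
    (h₂ : m₂ ∈ mixSet (fun x => b x / (1 - ε)) a) :
    m₁ * m₂ ∈ mixSet (fun x => a x / (1 - 2 * ε)) a := by
  obtain ⟨hm₁, H₁⟩ := h₁
  obtain ⟨hm₂, H₂⟩ := h₂
  have hε1 : (0:ℝ) < 1 - ε := by linarith
  have hε2 : (0:ℝ) < 1 - 2 * ε := by linarith
  refine ⟨mul_pos hm₁ hm₂, fun l hl => ?_⟩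
  have hI : 0 ≤ ∫ x in (0:ℝ)..l, a x :=
    intervalIntegral.integral_nonneg hl (fun x _ => ha_nonneg x)
  have e₁ := H₂ (l * m₁) (by positivity)
  have e₂ := H₁ l hl
  simp only [intervalIntegral.integral_div] at e₁ e₂ ⊢
  rw [show l * (m₁ * m₂) = l * m₁ * m₂ by ring]
  calc ∫ x in (0:ℝ)..(l * m₁ * m₂), a x
      ≤ (∫ x in (0:ℝ)..(l * m₁), b x) / (1 - ε) := e₁
    _ ≤ ((∫ x in (0:ℝ)..l, a x) / (1 - ε)) / (1 - ε) := by gcongr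
    _ = (∫ x in (0:ℝ)..l, a x) / ((1 - ε) * (1 - ε)) := by rw [div_div]
    _ ≤ (∫ x in (0:ℝ)..l, a x) / (1 - 2 * ε) := by
        apply div_le_div_of_nonneg_left hI hε2
        nlinarith [sq_nonneg ε]

/-- Triangle inequality for the work functional:
`W^ε(A→B) + W^ε(B→A) ≤ W^{2ε}(A→A)`. Here `a`, `b` are the Gibbs rescalings of
the states `A`, `B`; all relative mixednesses involved are assumed finite
(admissible sets bounded above) and positive. -/
theorem work_triangle
    (k T ε : ℝ) (hk : 0 < k) (hT : 0 < T) (hε0 : 0 ≤ ε) (hε : ε < 1 / 2)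
    (a b : ℝ → ℝ)
    (ha_anti : AntitoneOn a (Ici 0)) (hb_anti : AntitoneOn b (Ici 0))
    (ha_nonneg : ∀ x, 0 ≤ a x) (hb_nonneg : ∀ x, 0 ≤ b x)
    (ha_int : IntegrableOn a (Ici 0)) (hb_int : IntegrableOn b (Ici 0))
    (ha_prob : ∫ x in Set.Ici (0:ℝ), a x = 1)
    (hb_prob : ∫ x in Set.Ici (0:ℝ), b x = 1)
    (hpos_ab : 0 < relMix (fun x => a x / (1 - ε)) b)
    (hpos_ba : 0 < relMix (fun x => b x / (1 - ε)) a)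
    (hpos_aa : 0 < relMix (fun x => a x / (1 - 2 * ε)) a)
    (hbdd_ab : BddAbove (mixSet (fun x => a x / (1 - ε)) b))
    (hbdd_ba : BddAbove (mixSet (fun x => b x / (1 - ε)) a))
    (hbdd_aa : BddAbove (mixSet (fun x => a x / (1 - 2 * ε)) a)) :
    work k T ε a b + work k T ε b a ≤ work k T (2 * ε) a a := by
  set Mab := relMix (fun x => a x / (1 - ε)) b with hMab
  set Mba := relMix (fun x => b x / (1 - ε)) a with hMba
  set Maa := relMix (fun x => a x / (1 - 2 * ε)) a with hMaa
  have hne_ab : (mixSet (fun x => a x / (1 - ε)) b).Nonempty := by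
    by_contra h
    rw [Set.not_nonempty_iff_eq_empty] at h
    rw [hMab, relMix, h, Real.sSup_empty] at hpos_ab
    exact lt_irrefl 0 hpos_ab
  have hne_ba : (mixSet (fun x => b x / (1 - ε)) a).Nonempty := by
    by_contra h
    rw [Set.not_nonempty_iff_eq_empty] at h
    rw [hMba, relMix, h, Real.sSup_empty] at hpos_ba
    exact lt_irrefl 0 hpos_ba
  -- key product inequality
  have key : Mab * Mba ≤ Maa := by
    have step : ∀ m₂ ∈ mixSet (fun x => b x / (1 - ε)) a, Mab * m₂ ≤ Maa := by
      intro m₂ hm₂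
      have hm₂pos : 0 < m₂ := hm₂.1
      have : Mab ≤ Maa / m₂ := by
        apply csSup_le hne_ab
        intro m₁ hm₁
        rw [le_div_iff₀ hm₂pos]
        exact le_csSup hbdd_aa (mem_mix_comp hε0 hε a b ha_nonneg hm₁ hm₂)
      calc Mab * m₂ ≤ (Maa / m₂) * m₂ := by
            exact mul_le_mul_of_nonneg_right this hm₂pos.le
        _ = Maa := div_mul_cancel₀ _ hm₂pos.ne'
    have : Mba ≤ Maa / Mab := by
      apply csSup_le hne_ba
      intro m₂ hm₂
      rw [le_div_iff₀ hpos_ab]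
      calc m₂ * Mab = Mab * m₂ := mul_comm _ _
        _ ≤ Maa := step m₂ hm₂
    calc Mab * Mba ≤ Mab * (Maa / Mab) := by
          exact mul_le_mul_of_nonneg_left this hpos_ab.le
      _ = Maa := mul_div_cancel₀ _ hpos_ab.ne'
  have hlog : Real.log Mab + Real.log Mba ≤ Real.log Maa := by
    rw [← Real.log_mul hpos_ab.ne' hpos_ba.ne']
    exact Real.log_le_log (mul_pos hpos_ab hpos_ba) key
  simp only [work]
  calc k * T * Real.log Mab + k * T * Real.log Mba
      = k * T * (Real.log Mab + Real.log Mba) := by ring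
    _ ≤ k * T * Real.log Maa :=
        mul_le_mul_of_nonneg_left hlog (by positivity)
end

section
/- Generalized Kelvin second law: for any cycle A₁ → A₂ → … → A_m → A₁ of states, the sum of ε-risk works over the steps satisfies Σ_{i=1}^{m} W^ε(A_i → A_{i+1}) ≤ W^{mε}(A₁ → A₁) (indices mod m), assuming mε < 1. -/
open MeasureTheory Set

/-!
Admissible mixing factors multiply along a chain `f → g → h` and survive dividing both
densities by the same `c > 0`. So, going once around the cycle, admissible factors `mᵢ` for
the steps `Aᵢ/(1-ε) → Aᵢ₊₁` give the admissible factor `∏ mᵢ` for `A₀/(1-ε)^m → A₀`, hence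
for `A₀/(1-mε) → A₀` by Bernoulli's inequality `1 - mε ≤ (1-ε)^m`. Taking suprema yields
`∏ M(Aᵢ/(1-ε) ‖ Aᵢ₊₁) ≤ M(A₀/(1-mε) ‖ A₀)`, and the theorem is its logarithm.
-/

open scoped Pointwise in
theorem Real.prod_sSup_le_of_forall_prod_le {ι : Type*} [DecidableEq ι] {S : ι → Set ℝ}
    (s : Finset ι) (hne : ∀ i ∈ s, (S i).Nonempty) (hpos : ∀ i ∈ s, ∀ x ∈ S i, 0 < x) {C : ℝ}
    (h : ∀ g : ι → ℝ, (∀ i ∈ s, g i ∈ S i) → ∏ i ∈ s, g i ≤ C) :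
    ∏ i ∈ s, sSup (S i) ≤ C := by
  induction s using Finset.induction_on generalizing C with
  | empty => simpa using h 1 (by simp)
  | @insert a s ha ih =>
    simp only [Finset.forall_mem_insert] at hne hpos
    rw [Finset.prod_insert ha]
    set P := ∏ i ∈ s, sSup (S i)
    have hP : 0 ≤ P :=
      Finset.prod_nonneg fun i hi => Real.sSup_nonneg fun x hx => (hpos.2 i hi x hx).le
    have hmul : ∀ x ∈ S a, P * x ≤ C := by
      intro x hx
      -- with the `a`-th factor fixed to `x`, the other factors have product at most `C / x`
      rw [mul_comm, ← le_div_iff₀' (hpos.1 x hx)]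
      refine ih hne.2 hpos.2 fun g hg => ?_
      rw [le_div_iff₀' (hpos.1 x hx)]
      have hupdate : ∀ i ∈ insert a s, Function.update g a x i ∈ S i := by
        simp only [Finset.forall_mem_insert, Function.update_self]
        refine ⟨hx, fun i hi => ?_⟩
        rw [Function.update_of_ne (ne_of_mem_of_not_mem hi ha)]
        exact hg i hi
      simpa [Finset.prod_insert ha, Finset.prod_update_of_notMem ha] using h _ hupdate
    calc sSup (S a) * P = sSup (P • S a) := by
          rw [Real.sSup_smul_of_nonneg hP, smul_eq_mul, mul_comm]
      _ ≤ C := csSup_le hne.1.smul_set (Set.forall_mem_image.2 hmul)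

section mixSet

variable {f g h : ℝ → ℝ} {m m' c c' : ℝ}

theorem nonempty_mixSet_of_relMix_pos (h : 0 < relMix f g) : (mixSet f g).Nonempty :=
  Set.nonempty_iff_ne_empty.2 fun he => by simp [relMix, he] at h

theorem one_mem_mixSet_self : 1 ∈ mixSet f f :=
  ⟨one_pos, fun l _ => by rw [mul_one]⟩

theorem mul_mem_mixSet (hm : m ∈ mixSet f g) (hm' : m' ∈ mixSet g h) : m * m' ∈ mixSet f h :=
  ⟨mul_pos hm.1 hm'.1, fun l hl => by
    rw [← mul_assoc]
    exact (hm'.2 _ (mul_nonneg hl hm.1.le)).trans (hm.2 l hl)⟩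

theorem mixSet_subset_mixSet_div (hc : 0 < c) :
    mixSet f g ⊆ mixSet (fun x => f x / c) (fun x => g x / c) :=
  fun _ hm => ⟨hm.1, fun l hl => by
    simp only [intervalIntegral.integral_div]
    exact div_le_div_of_nonneg_right (hm.2 l hl) hc.le⟩

theorem mixSet_div_subset_of_le (hf : ∀ x, 0 ≤ x → 0 ≤ f x) (hc : 0 < c) (hcc' : c ≤ c') :
    mixSet (fun x => f x / c') g ⊆ mixSet (fun x => f x / c) g :=
  fun _ hm => ⟨hm.1, fun l hl => by
    have hint : 0 ≤ ∫ x in (0:ℝ)..l, f x :=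
      intervalIntegral.integral_nonneg hl fun x hx => hf x hx.1
    refine (hm.2 l hl).trans ?_
    simp only [intervalIntegral.integral_div]
    exact div_le_div_of_nonneg_left hint hc hcc'⟩

theorem prod_range_mem_mixSet_div_pow (b : ℕ → ℝ → ℝ) (g : ℕ → ℝ) (hc : 0 < c) (n : ℕ)
    (hg : ∀ i < n, g i ∈ mixSet (fun x => b i x / c) (b (i + 1))) :
    ∏ i ∈ Finset.range n, g i ∈ mixSet (fun x => b 0 x / c ^ n) (b n) := by
  induction n with
  | zero => simpa using one_mem_mixSet_self
  | succ n ih =>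
    rw [Finset.prod_range_succ]
    have hchain := mul_mem_mixSet
      (mixSet_subset_mixSet_div hc (ih fun i hi => hg i (by omega))) (hg n n.lt_succ_self)
    simpa only [pow_succ, div_div] using hchain

open Fin.NatCast in
theorem prod_mem_mixSet_of_cycle {n : ℕ} [NeZero n] (a : Fin n → ℝ → ℝ) (g : Fin n → ℝ)
    (hc : 0 < c) (hg : ∀ i, g i ∈ mixSet (fun x => a i x / c) (a (i + 1))) :
    ∏ i, g i ∈ mixSet (fun x => a 0 x / c ^ n) (a 0) := by
  have hchain := prod_range_mem_mixSet_div_pow (fun i => a i) (fun i => g i) hc n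
    fun i _ => by simpa only [Nat.cast_succ] using hg i
  simpa only [Nat.cast_zero, Fin.natCast_self, ← Fin.prod_univ_eq_prod_range,
    Fin.cast_val_eq_self] using hchain

end mixSet

theorem generalized_kelvin_second_law_general
    (k T ε : ℝ) (hk : 0 < k) (hT : 0 < T)
    (m : ℕ) [NeZero m] (hmε : (m : ℝ) * ε < 1)
    (a : Fin m → ℝ → ℝ)
    (ha_nonneg : ∀ i x, 0 ≤ a i x)
    (hpos : ∀ i : Fin m, 0 < relMix (fun x => a i x / (1 - ε)) (a (i + 1)))
    (hbdd0 : BddAbove (mixSet (fun x => a 0 x / (1 - (m : ℝ) * ε)) (a 0))) :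
    ∑ i : Fin m, work k T ε (a i) (a (i + 1))
      ≤ work k T ((m : ℝ) * ε) (a 0) (a 0) := by
  have hm : (1 : ℝ) ≤ m := by exact_mod_cast NeZero.one_le
  have hε : 0 < 1 - ε := by rcases le_or_gt 0 ε with hε | hε <;> nlinarith
  have hbernoulli : 1 - (m : ℝ) * ε ≤ (1 - ε) ^ m := by
    simpa [sub_eq_add_neg] using one_add_mul_le_pow (a := -ε) (by linarith) m
  have hprod : ∏ i, relMix (fun x => a i x / (1 - ε)) (a (i + 1))
      ≤ relMix (fun x => a 0 x / (1 - (m : ℝ) * ε)) (a 0) :=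
    Real.prod_sSup_le_of_forall_prod_le Finset.univ
      (fun i _ => nonempty_mixSet_of_relMix_pos (hpos i))
      (fun _ _ _ hx => hx.1) fun g hg => le_csSup hbdd0 <|
        mixSet_div_subset_of_le (fun x _ => ha_nonneg 0 x) (by linarith) hbernoulli <|
          prod_mem_mixSet_of_cycle a g hε fun i => hg i (Finset.mem_univ i)
  calc ∑ i, work k T ε (a i) (a (i + 1))
      = k * T * Real.log (∏ i, relMix (fun x => a i x / (1 - ε)) (a (i + 1))) := by
        rw [Real.log_prod fun i _ => (hpos i).ne', Finset.mul_sum]; rfl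
    _ ≤ work k T ((m : ℝ) * ε) (a 0) (a 0) := by
        unfold work
        gcongr
        exact Finset.prod_pos fun i _ => hpos i

/-- Generalized Kelvin second law: for a cycle `A₀ → A₁ → … → A_{m-1} → A₀`
of states (given by their Gibbs rescalings `a i`), the sum of the ε-risk works
over the steps is at most `W^{mε}(A₀→A₀)`, provided `mε < 1`. All the relative
mixednesses involved are assumed finite (admissible sets bounded above) and
positive. -/
theorem generalized_kelvin_second_law
    (k T ε : ℝ) (hk : 0 < k) (hT : 0 < T) (hε0 : 0 ≤ ε)
    (m : ℕ) [NeZero m] (hmε : (m : ℝ) * ε < 1)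
    (a : Fin m → ℝ → ℝ)
    (ha_anti : ∀ i, AntitoneOn (a i) (Ici 0))
    (ha_nonneg : ∀ i x, 0 ≤ a i x)
    (ha_int : ∀ i, IntegrableOn (a i) (Ici 0))
    (ha_prob : ∀ i, ∫ x in Set.Ici (0:ℝ), a i x = 1)
    (hpos : ∀ i : Fin m, 0 < relMix (fun x => a i x / (1 - ε)) (a (i + 1)))
    (hbdd : ∀ i : Fin m, BddAbove (mixSet (fun x => a i x / (1 - ε)) (a (i + 1))))
    (hpos0 : 0 < relMix (fun x => a 0 x / (1 - (m : ℝ) * ε)) (a 0))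
    (hbdd0 : BddAbove (mixSet (fun x => a 0 x / (1 - (m : ℝ) * ε)) (a 0))) :
    ∑ i : Fin m, work k T ε (a i) (a (i + 1))
      ≤ work k T ((m : ℝ) * ε) (a 0) (a 0) :=
  generalized_kelvin_second_law_general k T ε hk hT m hmε a ha_nonneg hpos hbdd0
end

section
/- For two-level thermalization at inverse temperature β, the von Neumann entropy change dominates β times the expected energy change: if a two-level probability pair (λ₁, λ₂) with λ₁+λ₂ = λ₁₂ fixed and energies E₁ ≥ E₂ evolves so that λ₁/λ₂ moves (weakly) closer to e^{-β(E₁-E₂)}, then ΔS ≥ β·Δ⟨E⟩, where S = -λ₁ ln λ₁ - λ₂ ln λ₂ and ⟨E⟩ = λ₁E₁ + λ₂E₂. -/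
/-!
With `c = β(E₁ - E₂)` and `λ₂ = λ₁₂ - λ₁`, the quantity `S - β⟨E⟩` is, up to an additive
constant, `massieu λ₁₂ c λ₁`. Its derivative `log (λ₁₂ - x) - log x - c` is strictly decreasing
in `x` and vanishes exactly at the thermal value `λ₁ᵀ`, so `massieu` increases up to `λ₁ᵀ` and
decreases after it: moving `λ₁` towards `λ₁ᵀ` can only increase `S - β⟨E⟩`.
-/

open Real Set

noncomputable def massieu (L c x : ℝ) : ℝ := negMulLog x + negMulLog (L - x) - c * x

section

variable {L c t : ℝ}

lemma hasDerivAt_massieu {x : ℝ} (hx : x ≠ 0) (hxL : x ≠ L) :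
    HasDerivAt (massieu L c) (log (L - x) - log x - c) x := by
  have hL : HasDerivAt (fun y ↦ negMulLog (L - y)) (log (L - x) + 1) x :=
    ((hasDerivAt_negMulLog (sub_ne_zero.2 hxL.symm)).comp x
      ((hasDerivAt_id' x).const_sub L)).congr_deriv (by ring)
  exact (((hasDerivAt_negMulLog hx).add hL).sub
    ((hasDerivAt_id' x).const_mul c)).congr_deriv (by ring)

lemma log_sub_sub_log_le_of_le {x y : ℝ} (hx : 0 < x) (hxy : x ≤ y) (hy : y < L) :
    log (L - y) - log y ≤ log (L - x) - log x := by
  have := log_le_log hx hxy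
  have := log_le_log (sub_pos.2 hy) (sub_le_sub_left hxy L)
  linarith

lemma continuousOn_massieu {s : Set ℝ} (hs : s ⊆ Ioo 0 L) : ContinuousOn (massieu L c) s :=
  fun _ hx ↦ (hasDerivAt_massieu (hs hx).1.ne' (hs hx).2.ne).continuousAt.continuousWithinAt

lemma massieu_monotoneOn (ht : t < L) (hc : c = log (L - t) - log t) :
    MonotoneOn (massieu L c) (Ioc 0 t) := by
  refine monotoneOn_of_hasDerivWithinAt_nonneg (f' := fun x ↦ log (L - x) - log x - c)
    (convex_Ioc 0 t)
    (continuousOn_massieu fun x hx ↦ ⟨hx.1, hx.2.trans_lt ht⟩) (fun x hx ↦ ?_) fun x hx ↦ ?_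
  all_goals rw [interior_Ioc] at hx
  · exact (hasDerivAt_massieu hx.1.ne' (hx.2.trans ht).ne).hasDerivWithinAt
  · have := log_sub_sub_log_le_of_le hx.1 hx.2.le ht
    linarith

lemma massieu_antitoneOn (ht : 0 < t) (hc : c = log (L - t) - log t) :
    AntitoneOn (massieu L c) (Ico t L) := by
  refine antitoneOn_of_hasDerivWithinAt_nonpos (f' := fun x ↦ log (L - x) - log x - c)
    (convex_Ico t L)
    (continuousOn_massieu fun x hx ↦ ⟨ht.trans_le hx.1, hx.2⟩) (fun x hx ↦ ?_) fun x hx ↦ ?_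
  all_goals rw [interior_Ico] at hx
  · exact (hasDerivAt_massieu (ht.trans hx.1).ne' hx.2.ne).hasDerivWithinAt
  · have := log_sub_sub_log_le_of_le ht hx.1.le hx.2
    linarith

lemma massieu_le_massieu_of_between {x y : ℝ} (hx : 0 < x) (hxL : x < L) (ht : 0 < t)
    (htL : t < L) (hc : c = log (L - t) - log t)
    (hy : (x ≤ y ∧ y ≤ t) ∨ (t ≤ y ∧ y ≤ x)) : massieu L c x ≤ massieu L c y := by
  rcases hy with ⟨hxy, hyt⟩ | ⟨hty, hyx⟩
  · exact massieu_monotoneOn htL hc ⟨hx, hxy.trans hyt⟩ ⟨hx.trans_le hxy, hyt⟩ hxy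
  · exact massieu_antitoneOn ht hc ⟨hty, hyx.trans_lt hxL⟩ ⟨hty.trans hyx, hxL⟩ hyx

end

theorem two_level_entropy_increase_general
    (β E₁ E₂ lam12 lamT lam lam' : ℝ)
    (hlam : 0 < lam) (hlam' : lam < lam12)
    (hT0 : 0 < lamT) (hT1 : lamT < lam12)
    -- the thermal value: λ₁ᵀ/(λ₁₂ - λ₁ᵀ) = e^{-β(E₁-E₂)}
    (hThermal : lamT / (lam12 - lamT) = Real.exp (-β * (E₁ - E₂)))
    -- λ₁' lies (weakly) between λ₁ and λ₁ᵀ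
    (hBetween : (lam ≤ lam' ∧ lam' ≤ lamT) ∨ (lamT ≤ lam' ∧ lam' ≤ lam)) :
    (-lam' * Real.log lam' - (lam12 - lam') * Real.log (lam12 - lam'))
      - (-lam * Real.log lam - (lam12 - lam) * Real.log (lam12 - lam))
      ≥ β * ((lam' - lam) * (E₁ - E₂)) := by
  have hc : β * (E₁ - E₂) = log (lam12 - lamT) - log lamT := by
    have := congrArg log hThermal
    rw [log_div hT0.ne' (sub_pos.2 hT1).ne', log_exp] at this
    linarith
  have hincrease := massieu_le_massieu_of_between hlam hlam' hT0 hT1 hc hBetween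
  simp only [massieu, negMulLog] at hincrease
  linarith

/-- Two-level thermalization entropy-increase law: if the occupation `λ₁`
(of the upper level, with `λ₁ + λ₂ = λ₁₂` fixed) moves weakly closer to its
thermal value `λ₁ᵀ`, then `ΔS ≥ β·Δ⟨E⟩`. -/
theorem two_level_entropy_increase
    (β E₁ E₂ lam12 lamT lam lam' : ℝ)
    (hβ : 0 < β) (hE : E₂ ≤ E₁)
    (h12a : 0 < lam12) (h12b : lam12 ≤ 1)
    (hlam : 0 < lam) (hlam' : lam < lam12)
    (hlam'' : 0 < lam') (hlam''' : lam' < lam12)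
    (hT0 : 0 < lamT) (hT1 : lamT < lam12)
    -- the thermal value: λ₁ᵀ/(λ₁₂ - λ₁ᵀ) = e^{-β(E₁-E₂)}
    (hThermal : lamT / (lam12 - lamT) = Real.exp (-β * (E₁ - E₂)))
    -- λ₁' lies (weakly) between λ₁ and λ₁ᵀ
    (hBetween : (lam ≤ lam' ∧ lam' ≤ lamT) ∨ (lamT ≤ lam' ∧ lam' ≤ lam)) :
    (-lam' * Real.log lam' - (lam12 - lam') * Real.log (lam12 - lam'))
      - (-lam * Real.log lam - (lam12 - lam) * Real.log (lam12 - lam))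
      ≥ β * ((lam' - lam) * (E₁ - E₂)) :=
  two_level_entropy_increase_general β E₁ E₂ lam12 lamT lam lam' hlam hlam' hT0 hT1 hThermal
    hBetween
end

section
/- Fine-graining of a stochastic matrix preserving the Gibbs state yields a bistochastic matrix: given a stochastic n×n matrix B with B·g = g for the Gibbs vector g (g_k = e^{-E_k/(kT)}/Z), and positive integers N₁,…,N_n with ΣN_k = N, the N×N matrix F with entries F_{lm} = B_{k_l k_m}/N_{k_l} (where k_l is the level containing fine block l) is bistochastic. -/
open Finset

/-- Fine-graining of a stochastic matrix preserving the Gibbs state yields a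
bistochastic matrix: if `B` is stochastic and fixes the Gibbs vector `g`
(with `g k = c · N_k` for fine-block counts `N_k`), then the fine-grained
matrix `F l m = B (k_l) (k_m) / N_{k_l}` is bistochastic. -/
theorem fine_graining_bistochastic
    (n N : ℕ) (hn : 0 < n) (hN : 0 < N)
    (B : Matrix (Fin n) (Fin n) ℝ)
    (hB_nonneg : ∀ i j, 0 ≤ B i j)
    (hB_col : ∀ j, ∑ i, B i j = 1)
    (g : Fin n → ℝ) (hg_pos : ∀ k, 0 < g k)
    (hB_gibbs : B.mulVec g = g)
    (Nk : Fin n → ℕ) (hNk_pos : ∀ k, 0 < Nk k) (hNk_sum : ∑ k, Nk k = N)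
    (c : ℝ) (hc : 0 < c) (hg_prop : ∀ k, g k = c * (Nk k : ℝ))
    (kl : Fin N → Fin n)
    (hkl : ∀ k : Fin n, (Finset.univ.filter (fun l : Fin N => kl l = k)).card = Nk k)
    (F : Matrix (Fin N) (Fin N) ℝ)
    (hF : ∀ l m, F l m = B (kl l) (kl m) / (Nk (kl l) : ℝ)) :
    (∀ l m, 0 ≤ F l m) ∧ (∀ m, ∑ l, F l m = 1) ∧ (∀ l, ∑ m, F l m = 1) := by
  have hNk_ne : ∀ k, (Nk k : ℝ) ≠ 0 := fun k => by
    exact Nat.cast_ne_zero.mpr (hNk_pos k).ne'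
  -- key: ∑ k, B i k * Nk k = Nk i
  have key : ∀ i, ∑ k, B i k * (Nk k : ℝ) = (Nk i : ℝ) := by
    intro i
    have h := congrFun hB_gibbs i
    simp only [Matrix.mulVec, dotProduct] at h
    simp only [hg_prop] at h
    have : c * ∑ k, B i k * (Nk k : ℝ) = c * (Nk i : ℝ) := by
      rw [Finset.mul_sum]; rw [← h]; congr 1; ext k; ring
    exact mul_left_cancel₀ hc.ne' this
  refine ⟨fun l m => ?_, fun m => ?_, fun l => ?_⟩
  · rw [hF]
    exact div_nonneg (hB_nonneg _ _) (Nat.cast_nonneg _)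
  · -- column sum
    calc ∑ l, F l m = ∑ l, B (kl l) (kl m) / (Nk (kl l) : ℝ) := by
          simp only [hF]
      _ = ∑ k, ∑ l ∈ Finset.univ.filter (fun l : Fin N => kl l = k),
            B (kl l) (kl m) / (Nk (kl l) : ℝ) :=
          (Finset.sum_fiberwise _ _ _).symm
      _ = ∑ k, ∑ _l ∈ Finset.univ.filter (fun l : Fin N => kl l = k),
            B k (kl m) / (Nk k : ℝ) := by
          refine Finset.sum_congr rfl fun k _ => Finset.sum_congr rfl fun l hl => ?_
          rw [Finset.mem_filter] at hl; rw [hl.2]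
      _ = ∑ k, (Nk k : ℝ) * (B k (kl m) / (Nk k : ℝ)) := by
          simp [Finset.sum_const, hkl, mul_comm]
      _ = ∑ k, B k (kl m) := by
          refine Finset.sum_congr rfl fun k _ => ?_
          rw [mul_div_cancel₀ _ (hNk_ne k)]
      _ = 1 := hB_col _
  · -- row sum
    calc ∑ m, F l m = ∑ m, B (kl l) (kl m) / (Nk (kl l) : ℝ) := by
          simp only [hF]
      _ = ∑ k, ∑ m ∈ Finset.univ.filter (fun m : Fin N => kl m = k),
            B (kl l) (kl m) / (Nk (kl l) : ℝ) :=
          (Finset.sum_fiberwise _ _ _).symm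
      _ = ∑ k, (Nk k : ℝ) * (B (kl l) k / (Nk (kl l) : ℝ)) := by
          refine Finset.sum_congr rfl fun k _ => ?_
          have : ∀ m ∈ Finset.univ.filter (fun m : Fin N => kl m = k),
              B (kl l) (kl m) / (Nk (kl l) : ℝ) = B (kl l) k / (Nk (kl l) : ℝ) := by
            intro m hm; rw [Finset.mem_filter] at hm; rw [hm.2]
          rw [Finset.sum_congr rfl this, Finset.sum_const, hkl, nsmul_eq_mul]
      _ = (∑ k, B (kl l) k * (Nk k : ℝ)) / (Nk (kl l) : ℝ) := by
          rw [Finset.sum_div]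
          exact Finset.sum_congr rfl fun k _ => by ring
      _ = 1 := by rw [key]; exact div_self (hNk_ne _)
end

section
/- Expected multiplicative work of the isothermal shift is 1: with α₁ = A(j)/(A(j)+A(k)), α₂ = 1−α₁, σ(1) = −1, σ(2) = +1, for paths s ∈ {1,2}^n with probabilities P(s) = Π_{l=1}^n (α_{s_l} + σ(s_l)(l−1)w/n) and multiplicative works w_tot(s) = Π_{l=1}^n (α_{s_l} + σ(s_l)·l·w/n)/(α_{s_l} + σ(s_l)(l−1)w/n), the expectation Σ_s P(s)·w_tot(s) = 1. -/
open Finset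

/-- Expected multiplicative work of the isothermal shift is 1: with
`α₁ ∈ (0,1)`, `α₂ = 1-α₁`, signs `σ(1) = -1`, `σ(2) = +1` (here encoded by
`Bool`: `false ↔ 1`, `true ↔ 2`), path probabilities
`P(s) = Π_{l=1}^n (α_{s_l} + σ(s_l)(l-1)w/n)` and multiplicative works
`w_tot(s) = Π_{l=1}^n (α_{s_l} + σ(s_l)·l·w/n)/(α_{s_l} + σ(s_l)(l-1)w/n)`,
we have `Σ_s P(s)·w_tot(s) = 1`. -/
theorem isothermal_shift_expected_work
    (n : ℕ) (hn : 1 ≤ n) (α₁ w : ℝ) (hα : α₁ ∈ Set.Ioo (0:ℝ) 1)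
    (αf σf : Bool → ℝ)
    (hαf : αf false = α₁ ∧ αf true = 1 - α₁)
    (hσf : σf false = -1 ∧ σf true = 1)
    (hpos : ∀ (b : Bool) (l : ℕ), l ≤ n →
      0 < αf b + σf b * ((l : ℝ) * w / n)) :
    ∑ s : Fin n → Bool,
        (∏ l : Fin n, (αf (s l) + σf (s l) * (((l : ℕ) : ℝ) * w / n)))
          * (∏ l : Fin n,
              (αf (s l) + σf (s l) * ((((l : ℕ) : ℝ) + 1) * w / n))
                / (αf (s l) + σf (s l) * (((l : ℕ) : ℝ) * w / n)))
      = 1 := by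
  have key : ∀ s : Fin n → Bool,
      (∏ l : Fin n, (αf (s l) + σf (s l) * (((l : ℕ) : ℝ) * w / n)))
        * (∏ l : Fin n,
            (αf (s l) + σf (s l) * ((((l : ℕ) : ℝ) + 1) * w / n))
              / (αf (s l) + σf (s l) * (((l : ℕ) : ℝ) * w / n)))
      = ∏ l : Fin n, (αf (s l) + σf (s l) * ((((l : ℕ) : ℝ) + 1) * w / n)) := by
    intro s
    rw [← Finset.prod_mul_distrib]
    refine Finset.prod_congr rfl fun l _ => ?_
    have hne : αf (s l) + σf (s l) * (((l : ℕ) : ℝ) * w / n) ≠ 0 :=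
      (hpos (s l) l (le_of_lt l.2)).ne'
    rw [mul_comm, div_mul_cancel₀ _ hne]
  simp_rw [key]
  have : ∀ l : Fin n, ∑ b : Bool,
      (αf b + σf b * ((((l : ℕ) : ℝ) + 1) * w / n)) = 1 := by
    intro l
    simp [Fintype.sum_bool, hαf.1, hαf.2, hσf.1, hσf.2]
    ring
  calc ∑ s : Fin n → Bool, ∏ l : Fin n,
        (αf (s l) + σf (s l) * ((((l : ℕ) : ℝ) + 1) * w / n))
      = ∏ l : Fin n, ∑ b : Bool,
        (αf b + σf b * ((((l : ℕ) : ℝ) + 1) * w / n)) := by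
        rw [Finset.prod_univ_sum, Fintype.piFinset_univ]
    _ = 1 := by rw [Finset.prod_congr rfl fun l _ => this l]; simp
end
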